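/- Control of the nonlinear error term: there exists a constant C₁₈ > 0, independent of h, m, n and of the grid functions, such that for all periodic grid functions Φ^{k+1}, Φ^k, φ^{k+1}, φ^k, setting φ̃^{k+1} := Φ^{k+1} − φ^{k+1} and φ̃^k := Φ^k − φ^k, one has ‖Δ_h(χ(Φ^{k+1},Φ^k) − χ(φ^{k+1},φ^k))‖₂ ≤ C₁₈·{ K₁²·(‖Δ_hφ̃^{k+1}‖₂ + ‖Δ_hφ̃^k‖₂) + K₁K₄·(‖∇_hφ̃^{k+1}‖₄ + ‖∇_hφ̃^k‖₄) + (K₁K₃ + K₄²)·(‖φ̃^{k+1}‖_∞ + ‖φ̃^k‖_∞) + (K₅² + K₁K₂)·(‖φ̃^{k+1}‖₂ + ‖φ̃^k‖₂) }, where K₁ = ‖Φ^{k+1}‖_∞ + ‖Φ^k‖_∞ + ‖φ^{k+1}‖_∞ + ‖φ^k‖_∞, K₂ = ‖Δ_h^xΦ^{k+1}‖_∞ + ‖Δ_h^xΦ^k‖_∞ + ‖Δ_h^yΦ^{k+1}‖_∞ + ‖Δ_h^yΦ^k‖_∞, K₃ = ‖Δ_h^xφ^{k+1}‖₂ + ‖Δ_h^xφ^k‖₂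 + ‖Δ_h^yφ^{k+1}‖₂ + ‖Δ_h^yφ^k‖₂, K₄ = ‖∇_hΦ^{k+1}‖₄ + ‖∇_hΦ^k‖₄ + ‖∇_hφ^{k+1}‖₄ + ‖∇_hφ^k‖₄, and K₅ = ‖∇_hΦ^{k+1}‖_∞ + ‖∇_hΦ^k‖_∞. -/

import Mathlib

/-!
Split `Δₕ = Δₕˣ + Δₕʸ`. Summing by parts twice turns `∑ Δₕˣf · Δₕʸf` into `∑ (D_y D_x f)² ≥ 0`,
so each one-dimensional Laplacian of `φ̃` is bounded by `‖Δₕφ̃‖₂`. Since `χ` is a cubic form,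
`χ(Φ^{k+1}, Φ^k) − χ(φ^{k+1}, φ^k)` is a sum of twelve products `A · B · φ̃` with `A, B` among the
four grid functions, and the discrete Leibniz rule
`Δᵉ(fg) = f Δᵉg + g Δᵉf + D⁺f D⁺g + D⁻f D⁻g` expands each `Δᵉ(A B φ̃)` into nine terms, each
bounded by Hölder in the form `L^∞ · L²` or `L⁴ · L⁴`. The second differences of `Φ` enter in
`L^∞` and those of `φ` in `L²`: this is why `φ̃ · ΔᵉA` is estimated in two different ways.
-/

open Finset

noncomputable section

/-- Periodic grid functions on an `m × n` grid (indices taken modulo `m` and `n`). -/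
abbrev Grid (m n : ℕ) := ZMod m × ZMod n → ℝ

/-- Forward difference in the `x` direction. -/
def Dx {m n : ℕ} (h : ℝ) (φ : Grid m n) : Grid m n :=
  fun p => (φ (p.1 + 1, p.2) - φ p) / h

/-- Forward difference in the `y` direction. -/
def Dy {m n : ℕ} (h : ℝ) (φ : Grid m n) : Grid m n :=
  fun p => (φ (p.1, p.2 + 1) - φ p) / h

/-- The five-point discrete Laplacian. -/
def lapH {m n : ℕ} (h : ℝ) (φ : Grid m n) : Grid m n :=
  fun p => (φ (p.1 + 1, p.2) + φ (p.1 - 1, p.2) + φ (p.1, p.2 + 1) + φ (p.1, p.2 - 1)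
    - 4 * φ p) / h ^ 2

/-- One-dimensional discrete Laplacian in the `x` direction. -/
def lapHx {m n : ℕ} (h : ℝ) (φ : Grid m n) : Grid m n :=
  fun p => (φ (p.1 + 1, p.2) - 2 * φ p + φ (p.1 - 1, p.2)) / h ^ 2

/-- One-dimensional discrete Laplacian in the `y` direction. -/
def lapHy {m n : ℕ} (h : ℝ) (φ : Grid m n) : Grid m n :=
  fun p => (φ (p.1, p.2 + 1) - 2 * φ p + φ (p.1, p.2 - 1)) / h ^ 2

/-- Discrete `L²` norm. -/
def norm2 {m n : ℕ} [NeZero m] [NeZero n] (h : ℝ) (φ : Grid m n) : ℝ :=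
  Real.sqrt (h ^ 2 * ∑ p : ZMod m × ZMod n, φ p ^ 2)

/-- Discrete `L⁴` norm of the gradient. -/
def gradNorm4 {m n : ℕ} [NeZero m] [NeZero n] (h : ℝ) (φ : Grid m n) : ℝ :=
  (h ^ 2 * ∑ p : ZMod m × ZMod n, (Dx h φ p ^ 4 + Dy h φ p ^ 4)) ^ ((1 : ℝ) / 4)

/-- Discrete `L^∞` norm. -/
def normInf {m n : ℕ} [NeZero m] [NeZero n] (φ : Grid m n) : ℝ :=
  ⨆ p : ZMod m × ZMod n, |φ p|

/-- Discrete `L^∞` norm of the gradient. -/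
def gradNormInf {m n : ℕ} [NeZero m] [NeZero n] (h : ℝ) (φ : Grid m n) : ℝ :=
  ⨆ p : ZMod m × ZMod n, max |Dx h φ p| |Dy h φ p|

/-- The nonlinear term `χ(u, v) = ((u² + v²)/2) · ((u + v)/2)`. -/
def chi (u v : ℝ) : ℝ := (u ^ 2 + v ^ 2) / 2 * ((u + v) / 2)

section Norms

variable {m n : ℕ} [NeZero m] [NeZero n] {h : ℝ}

def norm4 (h : ℝ) (f : Grid m n) : ℝ :=
  (h ^ 2 * ∑ p : ZMod m × ZMod n, f p ^ 4) ^ ((1 : ℝ) / 4)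

lemma abs_le_normInf (f : Grid m n) (p : ZMod m × ZMod n) : |f p| ≤ normInf f :=
  le_ciSup (f := fun q => |f q|) (Set.finite_range _).bddAbove p

lemma normInf_nonneg (f : Grid m n) : 0 ≤ normInf f :=
  (abs_nonneg _).trans (abs_le_normInf f 0)

lemma norm2_nonneg (f : Grid m n) : 0 ≤ norm2 h f := Real.sqrt_nonneg _

lemma norm4_nonneg (f : Grid m n) : 0 ≤ norm4 h f := by
  unfold norm4; positivity

lemma gradNorm4_nonneg (f : Grid m n) : 0 ≤ gradNorm4 h f := by
  unfold gradNorm4; positivity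

lemma norm2_eq_abs_mul_norm (f : Grid m n) :
    norm2 h f = |h| * ‖WithLp.toLp 2 f‖ := by
  simp [norm2, EuclideanSpace.norm_eq, Real.sqrt_mul (sq_nonneg h), Real.sqrt_sq_eq_abs]

lemma norm2_add_le (f g : Grid m n) : norm2 h (f + g) ≤ norm2 h f + norm2 h g := by
  simp only [norm2_eq_abs_mul_norm, WithLp.toLp_add, ← mul_add]
  gcongr
  exact norm_add_le _ _

lemma norm2_add_le_of_le {f g : Grid m n} {a b : ℝ} (hf : norm2 h f ≤ a) (hg : norm2 h g ≤ b) :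
    norm2 h (f + g) ≤ a + b :=
  (norm2_add_le f g).trans (add_le_add hf hg)

lemma norm2_smul (c : ℝ) (f : Grid m n) : norm2 h (c • f) = |c| * norm2 h f := by
  simp only [norm2_eq_abs_mul_norm, WithLp.toLp_smul, norm_smul, Real.norm_eq_abs]
  ring

lemma norm2_mul_le_of_abs_le {f : Grid m n} {a : ℝ} (hf : ∀ p, |f p| ≤ a) (g : Grid m n) :
    norm2 h (f * g) ≤ a * norm2 h g := by
  have ha : 0 ≤ a := (abs_nonneg _).trans (hf 0)
  rw [norm2, norm2, ← Real.sqrt_sq ha, ← Real.sqrt_mul (sq_nonneg a), mul_left_comm (a ^ 2),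
    mul_sum (s := univ) (a := a ^ 2)]
  refine Real.sqrt_le_sqrt (mul_le_mul_of_nonneg_left (sum_le_sum fun p _ => ?_) (sq_nonneg h))
  rw [Pi.mul_apply, mul_pow, ← sq_abs (f p)]
  gcongr
  exact hf p

lemma norm2_mul_le_of_abs_le' {g : Grid m n} {a : ℝ} (hg : ∀ p, |g p| ≤ a) (f : Grid m n) :
    norm2 h (f * g) ≤ a * norm2 h f :=
  mul_comm f g ▸ norm2_mul_le_of_abs_le hg f

lemma norm2_le_norm2_add {f g : Grid m n} (hfg : 0 ≤ ∑ p, f p * g p) :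
    norm2 h f ≤ norm2 h (f + g) := by
  refine Real.sqrt_le_sqrt (mul_le_mul_of_nonneg_left ?_ (sq_nonneg h))
  have hg : 0 ≤ ∑ p, g p ^ 2 := by positivity
  have hexpand : ∑ p, (f + g) p ^ 2 = ∑ p, f p ^ 2 + 2 * ∑ p, f p * g p + ∑ p, g p ^ 2 := by
    simp only [Pi.add_apply, mul_sum, ← sum_add_distrib]
    exact sum_congr rfl fun p _ => by ring
  linarith

lemma norm2_mul_le_norm4_mul_norm4 (f g : Grid m n) :
    norm2 h (f * g) ≤ norm4 h f * norm4 h g := by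
  have hsq : ∀ k : Grid m n, norm4 h k = Real.sqrt (Real.sqrt (h ^ 2 * ∑ p, k p ^ 4)) := by
    intro k
    rw [norm4, Real.sqrt_eq_rpow, Real.sqrt_eq_rpow, ← Real.rpow_mul (by positivity)]
    norm_num
  rw [hsq, hsq, ← Real.sqrt_mul (Real.sqrt_nonneg _), ← Real.sqrt_mul (by positivity), norm2]
  gcongr
  rw [Real.le_sqrt (by positivity) (by positivity)]
  calc (h ^ 2 * ∑ p, (f * g) p ^ 2) ^ 2 = (h ^ 2) ^ 2 * (∑ p, f p ^ 2 * g p ^ 2) ^ 2 := by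
        simp only [Pi.mul_apply, mul_pow]
    _ ≤ (h ^ 2) ^ 2 * ((∑ p, (f p ^ 2) ^ 2) * ∑ p, (g p ^ 2) ^ 2) := by
        gcongr; exact sum_mul_sq_le_sq_mul_sq _ _ _
    _ = _ := by simp only [← pow_mul]; ring

end Norms

section DirectionalDifferences

variable {m n : ℕ}

def dFwd (h : ℝ) (e : ZMod m × ZMod n) (f : Grid m n) : Grid m n :=
  fun p => (f (p + e) - f p) / h

def dBwd (h : ℝ) (e : ZMod m × ZMod n) (f : Grid m n) : Grid m n :=
  fun p => (f p - f (p - e)) / h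

def lapDir (h : ℝ) (e : ZMod m × ZMod n) (f : Grid m n) : Grid m n :=
  fun p => (f (p + e) - 2 * f p + f (p - e)) / h ^ 2

variable {h : ℝ} (e : ZMod m × ZMod n)

lemma lapDir_add (f g : Grid m n) : lapDir h e (f + g) = lapDir h e f + lapDir h e g := by
  funext p; simp only [lapDir, Pi.add_apply]; ring

lemma lapDir_smul (c : ℝ) (f : Grid m n) : lapDir h e (c • f) = c • lapDir h e f := by
  funext p; simp only [lapDir, Pi.smul_apply, smul_eq_mul]; ring

lemma lapDir_eq_dBwd_dFwd (f : Grid m n) : lapDir h e f = dBwd h e (dFwd h e f) := by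
  funext p; simp only [lapDir, dBwd, dFwd, sub_add_cancel]; ring

lemma dFwd_lapDir_comm (a : ZMod m × ZMod n) (f : Grid m n) :
    dFwd h a (lapDir h e f) = lapDir h e (dFwd h a f) := by
  funext p
  simp only [dFwd, lapDir, add_right_comm p a e, show p + a - e = p - e + a by abel]
  ring

lemma dFwd_mul (f g : Grid m n) :
    dFwd h e (f * g) = (fun p => f (p + e)) * dFwd h e g + g * dFwd h e f := by
  funext p; simp only [dFwd, Pi.mul_apply, Pi.add_apply]; ring

lemma dBwd_mul (f g : Grid m n) :
    dBwd h e (f * g) = (fun p => f (p - e)) * dBwd h e g + g * dBwd h e f := by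
  funext p; simp only [dBwd, Pi.mul_apply, Pi.add_apply]; ring

lemma lapDir_mul (f g : Grid m n) :
    lapDir h e (f * g) = f * lapDir h e g + g * lapDir h e f
      + dFwd h e f * dFwd h e g + dBwd h e f * dBwd h e g := by
  funext p; simp only [lapDir, dFwd, dBwd, Pi.mul_apply, Pi.add_apply]; ring

variable [NeZero m] [NeZero n]

lemma sum_dBwd_mul (f g : Grid m n) :
    ∑ p, dBwd h e f p * g p = -∑ p, f p * dFwd h e g p := by
  have hshift : ∑ p, f (p - e) * g p = ∑ p, f p * g (p + e) :=
    Fintype.sum_equiv (Equiv.subRight e) _ _ fun p => by simp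
  simp only [dBwd, dFwd, div_mul_eq_mul_div, mul_div_assoc', ← sum_div, sub_mul, mul_sub,
    sum_sub_distrib, hshift]
  ring

lemma norm4_dBwd (f : Grid m n) : norm4 h (dBwd h e f) = norm4 h (dFwd h e f) := by
  have hshift : ∑ p, dBwd h e f p ^ 4 = ∑ p, dFwd h e f p ^ 4 :=
    Fintype.sum_equiv (Equiv.subRight e) _ _ fun p => by simp [dBwd, dFwd]
  rw [norm4, norm4, hshift]

lemma sum_lapDir_mul_lapDir_nonneg (a : ZMod m × ZMod n) (f : Grid m n) :
    0 ≤ ∑ p, lapDir h a f p * lapDir h e f p := by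
  have hparts : ∑ p, lapDir h a f p * lapDir h e f p
      = ∑ p, dFwd h e (dFwd h a f) p ^ 2 := by
    calc ∑ p, lapDir h a f p * lapDir h e f p
        = -∑ p, dFwd h a f p * lapDir h e (dFwd h a f) p := by
          rw [lapDir_eq_dBwd_dFwd a, sum_dBwd_mul, dFwd_lapDir_comm]
      _ = ∑ p, dFwd h e (dFwd h a f) p ^ 2 := by
          simp only [lapDir_eq_dBwd_dFwd e (dFwd h a f), mul_comm (dFwd h a f _),
            sum_dBwd_mul, neg_neg, sq]
  exact hparts ▸ sum_nonneg fun p _ => sq_nonneg _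

lemma norm2_lapDir_le_norm2_add_lapDir (a : ZMod m × ZMod n) (f : Grid m n) :
    norm2 h (lapDir h e f) ≤ norm2 h (lapDir h e f + lapDir h a f) :=
  norm2_le_norm2_add (sum_lapDir_mul_lapDir_nonneg a e f)

end DirectionalDifferences

section TripleProduct

variable {m n : ℕ} [NeZero m] [NeZero n] {h : ℝ} {e : ZMod m × ZMod n}

lemma norm2_mul_mul_le {f g k : Grid m n} {a b c : ℝ} (hf : ∀ p, |f p| ≤ a)
    (hg : norm4 h g ≤ b) (hk : norm4 h k ≤ c) : norm2 h (f * (g * k)) ≤ a * (b * c) := by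
  have ha : 0 ≤ a := (abs_nonneg _).trans (hf 0)
  have hb : 0 ≤ b := (norm4_nonneg g).trans hg
  refine (norm2_mul_le_of_abs_le hf _).trans (mul_le_mul_of_nonneg_left ?_ ha)
  exact (norm2_mul_le_norm4_mul_norm4 g k).trans (mul_le_mul hg hk (norm4_nonneg k) hb)

lemma norm2_lapDir_mul_mul_le {A B w : Grid m n} {K G N Gw L M : ℝ}
    (hA : ∀ p, |A p| ≤ K) (hB : ∀ p, |B p| ≤ K)
    (hDA : norm4 h (dFwd h e A) ≤ G) (hDB : norm4 h (dFwd h e B) ≤ G)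
    (hw : ∀ p, |w p| ≤ N) (hDw : norm4 h (dFwd h e w) ≤ Gw) (hLw : norm2 h (lapDir h e w) ≤ L)
    (hwLA : norm2 h (w * lapDir h e A) ≤ M) (hwLB : norm2 h (w * lapDir h e B) ≤ M) :
    norm2 h (lapDir h e (A * B * w))
      ≤ K ^ 2 * L + 2 * K * M + 2 * N * G ^ 2 + 4 * K * G * Gw := by
  have hK : 0 ≤ K := (abs_nonneg _).trans (hA 0)
  have hdA : norm4 h (dBwd h e A) ≤ G := norm4_dBwd e A ▸ hDA
  have hdB : norm4 h (dBwd h e B) ≤ G := norm4_dBwd e B ▸ hDB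
  have hdw : norm4 h (dBwd h e w) ≤ Gw := norm4_dBwd e w ▸ hDw
  have hABLw : norm2 h (A * B * lapDir h e w) ≤ K * (K * L) := by
    rw [mul_assoc]
    refine (norm2_mul_le_of_abs_le hA _).trans (mul_le_mul_of_nonneg_left ?_ hK)
    exact (norm2_mul_le_of_abs_le hB _).trans (mul_le_mul_of_nonneg_left hLw hK)
  have hwLAB : norm2 h (w * lapDir h e (A * B)) ≤ K * M + K * M + N * (G * G) + N * (G * G) := by
    rw [lapDir_mul, show w * (A * lapDir h e B + B * lapDir h e A + dFwd h e A * dFwd h e B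
        + dBwd h e A * dBwd h e B) = A * (w * lapDir h e B) + B * (w * lapDir h e A)
        + w * (dFwd h e A * dFwd h e B) + w * (dBwd h e A * dBwd h e B) by ring]
    refine norm2_add_le_of_le (norm2_add_le_of_le (norm2_add_le_of_le ?_ ?_) ?_) ?_
    · exact (norm2_mul_le_of_abs_le hA _).trans (mul_le_mul_of_nonneg_left hwLB hK)
    · exact (norm2_mul_le_of_abs_le hB _).trans (mul_le_mul_of_nonneg_left hwLA hK)
    · exact norm2_mul_mul_le hw hDA hDB
    · exact norm2_mul_mul_le hw hdA hdB
  have hDABDw : norm2 h (dFwd h e (A * B) * dFwd h e w) ≤ K * (G * Gw) + K * (G * Gw) := by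
    rw [dFwd_mul, add_mul, mul_assoc, mul_assoc]
    exact norm2_add_le_of_le (norm2_mul_mul_le (fun p => hA _) hDB hDw)
      (norm2_mul_mul_le hB hDA hDw)
  have hdABdw : norm2 h (dBwd h e (A * B) * dBwd h e w) ≤ K * (G * Gw) + K * (G * Gw) := by
    rw [dBwd_mul, add_mul, mul_assoc, mul_assoc]
    exact norm2_add_le_of_le (norm2_mul_mul_le (fun p => hA _) hdB hdw)
      (norm2_mul_mul_le hB hdA hdw)
  rw [lapDir_mul]
  refine (norm2_add_le_of_le (norm2_add_le_of_le (norm2_add_le_of_le hABLw hwLAB) hDABDw)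
    hdABdw).trans_eq ?_
  ring

end TripleProduct

section Coordinates

variable {m n : ℕ} {h : ℝ}

lemma lapH_eq_lapDir_add_lapDir (f : Grid m n) :
    lapH h f = lapDir h (1, 0) f + lapDir h (0, 1) f := by
  funext ⟨x, y⟩
  simp only [lapH, lapDir, Pi.add_apply, Prod.mk_add_mk, Prod.mk_sub_mk, add_zero, sub_zero]
  ring

lemma lapDir_one_zero (f : Grid m n) : lapDir h (1, 0) f = lapHx h f := by
  funext ⟨x, y⟩
  simp only [lapDir, lapHx, Prod.mk_add_mk, Prod.mk_sub_mk, add_zero, sub_zero]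

lemma lapDir_zero_one (f : Grid m n) : lapDir h (0, 1) f = lapHy h f := by
  funext ⟨x, y⟩
  simp only [lapDir, lapHy, Prod.mk_add_mk, Prod.mk_sub_mk, add_zero, sub_zero]

variable [NeZero m] [NeZero n]

lemma norm4_dFwd_one_zero_le (f : Grid m n) : norm4 h (dFwd h (1, 0) f) ≤ gradNorm4 h f := by
  unfold norm4 gradNorm4
  gcongr with ⟨x, y⟩
  simp only [dFwd, Dx, Prod.mk_add_mk, add_zero, le_add_iff_nonneg_right]
  positivity

lemma norm4_dFwd_zero_one_le (f : Grid m n) : norm4 h (dFwd h (0, 1) f) ≤ gradNorm4 h f := by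
  unfold norm4 gradNorm4
  gcongr with ⟨x, y⟩
  simp only [dFwd, Dy, Prod.mk_add_mk, add_zero, le_add_iff_nonneg_left]
  positivity

lemma norm2_lapDir_one_zero_le (f : Grid m n) :
    norm2 h (lapDir h (1, 0) f) ≤ norm2 h (lapH h f) :=
  lapH_eq_lapDir_add_lapDir f ▸ norm2_lapDir_le_norm2_add_lapDir _ _ f

lemma norm2_lapDir_zero_one_le (f : Grid m n) :
    norm2 h (lapDir h (0, 1) f) ≤ norm2 h (lapH h f) :=
  (add_comm (lapDir h (1, 0) f) _ ▸ lapH_eq_lapDir_add_lapDir f) ▸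
    norm2_lapDir_le_norm2_add_lapDir _ _ f

end Coordinates

section NonlinearTerm

variable {m n : ℕ} [NeZero m] [NeZero n] {h : ℝ} {e : ZMod m × ZMod n}

theorem norm2_lapDir_chi_sub_le_of_le {U₁ U₀ u₁ u₀ : Grid m n} {K G N N₂ Gw L K₂ K₃ : ℝ}
    (hK : ∀ A ∈ [U₁, U₀, u₁, u₀], ∀ p, |A p| ≤ K)
    (hG : ∀ A ∈ [U₁, U₀, u₁, u₀], norm4 h (dFwd h e A) ≤ G)
    (hK₂ : ∀ A ∈ [U₁, U₀], ∀ p, |lapDir h e A p| ≤ K₂)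
    (hK₃ : ∀ A ∈ [u₁, u₀], norm2 h (lapDir h e A) ≤ K₃)
    (hN : ∀ w ∈ [U₁ - u₁, U₀ - u₀], ∀ p, |w p| ≤ N)
    (hN₂ : ∀ w ∈ [U₁ - u₁, U₀ - u₀], norm2 h w ≤ N₂)
    (hGw : ∀ w ∈ [U₁ - u₁, U₀ - u₀], norm4 h (dFwd h e w) ≤ Gw)
    (hL : ∀ w ∈ [U₁ - u₁, U₀ - u₀], norm2 h (lapDir h e w) ≤ L) :
    norm2 h (lapDir h e (fun p => chi (U₁ p) (U₀ p) - chi (u₁ p) (u₀ p)))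
      ≤ 3 * (K ^ 2 * L + 2 * K * (K₂ * N₂ + N * K₃) + 2 * N * G ^ 2 + 4 * K * G * Gw) := by
  set E := K ^ 2 * L + 2 * K * (K₂ * N₂ + N * K₃) + 2 * N * G ^ 2 + 4 * K * G * Gw
  have hM : ∀ w ∈ [U₁ - u₁, U₀ - u₀], ∀ A ∈ [U₁, U₀, u₁, u₀],
      norm2 h (w * lapDir h e A) ≤ K₂ * N₂ + N * K₃ := by
    intro w hw A hA
    have hN0 : 0 ≤ N := (abs_nonneg _).trans (hN w hw 0)
    have hK₂0 : 0 ≤ K₂ := (abs_nonneg _).trans (hK₂ U₁ (by simp) 0)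
    have hK₃0 : 0 ≤ K₃ := (norm2_nonneg _).trans (hK₃ u₁ (by simp))
    have hN₂0 : 0 ≤ N₂ := (norm2_nonneg _).trans (hN₂ w hw)
    rcases List.mem_append.mp (show A ∈ [U₁, U₀] ++ [u₁, u₀] from hA) with hA | hA
    · calc norm2 h (w * lapDir h e A) ≤ K₂ * N₂ := (norm2_mul_le_of_abs_le' (hK₂ A hA) w).trans
            (mul_le_mul_of_nonneg_left (hN₂ w hw) hK₂0)
        _ ≤ _ := le_add_of_nonneg_right (mul_nonneg hN0 hK₃0)
    · calc norm2 h (w * lapDir h e A) ≤ N * K₃ := (norm2_mul_le_of_abs_le (hN w hw) _).trans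
            (mul_le_mul_of_nonneg_left (hK₃ A hA) hN0)
        _ ≤ _ := le_add_of_nonneg_left (mul_nonneg hK₂0 hN₂0)
  have hterm : ∀ A ∈ [U₁, U₀, u₁, u₀], ∀ B ∈ [U₁, U₀, u₁, u₀], ∀ w ∈ [U₁ - u₁, U₀ - u₀],
      norm2 h (lapDir h e (A * B * w)) ≤ E :=
    fun A hA B hB w hw => norm2_lapDir_mul_mul_le (hK A hA) (hK B hB) (hG A hA) (hG B hB)
      (hN w hw) (hGw w hw) (hL w hw) (hM w hw A hA) (hM w hw B hB)
  set terms := [U₁ * U₁ * (U₁ - u₁), U₁ * u₁ * (U₁ - u₁), u₁ * u₁ * (U₁ - u₁),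
    U₁ * U₀ * (U₁ - u₁), u₁ * U₀ * (U₁ - u₁), U₀ * U₀ * (U₁ - u₁),
    u₁ * u₁ * (U₀ - u₀), u₁ * U₀ * (U₀ - u₀), u₁ * u₀ * (U₀ - u₀),
    U₀ * U₀ * (U₀ - u₀), U₀ * u₀ * (U₀ - u₀), u₀ * u₀ * (U₀ - u₀)] with hterms
  have hdecomp : (fun p => chi (U₁ p) (U₀ p) - chi (u₁ p) (u₀ p)) = (1 / 4 : ℝ) • terms.sum := by
    funext p
    simp only [chi, hterms, List.sum_cons, List.sum_nil, add_zero, Pi.smul_apply, Pi.add_apply,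
      Pi.mul_apply, Pi.sub_apply, smul_eq_mul]
    ring
  have hsub : norm2 h (lapDir h e terms.sum) ≤ (terms.map fun f => norm2 h (lapDir h e f)).sum :=
    List.le_sum_of_subadditive (fun f => norm2 h (lapDir h e f)) (by simp [lapDir, norm2])
      (fun f g => lapDir_add e f g ▸ norm2_add_le _ _) terms
  have hcard : (terms.map fun f => norm2 h (lapDir h e f)).sum ≤ terms.length • E := by
    refine List.length_map (fun f => norm2 h (lapDir h e f)) ▸ List.sum_le_card_nsmul _ E ?_
    simp only [hterms, List.map_cons, List.map_nil, List.forall_mem_cons, List.not_mem_nil,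
      IsEmpty.forall_iff, implies_true, and_true]
    and_intros
    all_goals exact hterm _ (by simp) _ (by simp) _ (by simp)
  calc norm2 h (lapDir h e (fun p => chi (U₁ p) (U₀ p) - chi (u₁ p) (u₀ p)))
      = 1 / 4 * norm2 h (lapDir h e terms.sum) := by
        rw [hdecomp, lapDir_smul, norm2_smul, abs_of_pos (by norm_num)]
    _ ≤ 1 / 4 * (terms.length • E) := by gcongr; exact hsub.trans hcard
    _ = 3 * E := by rw [nsmul_eq_mul, show terms.length = 12 from rfl]; ring

end NonlinearTerm

theorem norm2_lapDir_chi_sub_le {m n : ℕ} [NeZero m] [NeZero n] {h : ℝ}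
    (e : ZMod m × ZMod n) (hD : ∀ f : Grid m n, norm4 h (dFwd h e f) ≤ gradNorm4 h f)
    (hΔ : ∀ f : Grid m n, norm2 h (lapDir h e f) ≤ norm2 h (lapH h f)) (Φ₁ Φ₀ φ₁ φ₀ : Grid m n) :
    norm2 h (lapDir h e (fun p => chi (Φ₁ p) (Φ₀ p) - chi (φ₁ p) (φ₀ p)))
      ≤ 3 * ((normInf Φ₁ + normInf Φ₀ + normInf φ₁ + normInf φ₀) ^ 2
              * (norm2 h (lapH h (fun p => Φ₁ p - φ₁ p)) + norm2 h (lapH h (fun p => Φ₀ p - φ₀ p)))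
            + 2 * (normInf Φ₁ + normInf Φ₀ + normInf φ₁ + normInf φ₀)
              * ((normInf (lapDir h e Φ₁) + normInf (lapDir h e Φ₀))
                  * (norm2 h (fun p => Φ₁ p - φ₁ p) + norm2 h (fun p => Φ₀ p - φ₀ p))
                + (normInf (fun p => Φ₁ p - φ₁ p) + normInf (fun p => Φ₀ p - φ₀ p))
                  * (norm2 h (lapDir h e φ₁) + norm2 h (lapDir h e φ₀)))
            + 2 * (normInf (fun p => Φ₁ p - φ₁ p) + normInf (fun p => Φ₀ p - φ₀ p))
              * (gradNorm4 h Φ₁ + gradNorm4 h Φ₀ + gradNorm4 h φ₁ + gradNorm4 h φ₀) ^ 2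
            + 4 * (normInf Φ₁ + normInf Φ₀ + normInf φ₁ + normInf φ₀)
              * (gradNorm4 h Φ₁ + gradNorm4 h Φ₀ + gradNorm4 h φ₁ + gradNorm4 h φ₀)
              * (gradNorm4 h (fun p => Φ₁ p - φ₁ p) + gradNorm4 h (fun p => Φ₀ p - φ₀ p))) := by
  apply norm2_lapDir_chi_sub_le_of_le
  all_goals simp only [List.forall_mem_cons, List.not_mem_nil, IsEmpty.forall_iff, implies_true,
    and_true]
  · refine ⟨fun p => ?_, fun p => ?_, fun p => ?_, fun p => ?_⟩ <;>
      linarith [abs_le_normInf Φ₁ p, abs_le_normInf Φ₀ p, abs_le_normInf φ₁ p,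
        abs_le_normInf φ₀ p, normInf_nonneg Φ₁, normInf_nonneg Φ₀, normInf_nonneg φ₁,
        normInf_nonneg φ₀]
  · refine ⟨?_, ?_, ?_, ?_⟩ <;>
      linarith [hD Φ₁, hD Φ₀, hD φ₁, hD φ₀, gradNorm4_nonneg (h := h) Φ₁,
        gradNorm4_nonneg (h := h) Φ₀, gradNorm4_nonneg (h := h) φ₁, gradNorm4_nonneg (h := h) φ₀]
  · exact ⟨fun p => (abs_le_normInf _ p).trans (le_add_of_nonneg_right (normInf_nonneg _)),
      fun p => (abs_le_normInf _ p).trans (le_add_of_nonneg_left (normInf_nonneg _))⟩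
  · exact ⟨le_add_of_nonneg_right (norm2_nonneg _), le_add_of_nonneg_left (norm2_nonneg _)⟩
  · exact ⟨fun p => (abs_le_normInf (fun p => Φ₁ p - φ₁ p) p).trans
        (le_add_of_nonneg_right (normInf_nonneg _)),
      fun p => (abs_le_normInf (fun p => Φ₀ p - φ₀ p) p).trans
        (le_add_of_nonneg_left (normInf_nonneg _))⟩
  · exact ⟨le_add_of_nonneg_right (norm2_nonneg _), le_add_of_nonneg_left (norm2_nonneg _)⟩
  · exact ⟨(hD _).trans (le_add_of_nonneg_right (gradNorm4_nonneg _)),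
      (hD _).trans (le_add_of_nonneg_left (gradNorm4_nonneg _))⟩
  · exact ⟨(hΔ _).trans (le_add_of_nonneg_right (norm2_nonneg _)),
      (hΔ _).trans (le_add_of_nonneg_left (norm2_nonneg _))⟩

/-- Control of the nonlinear error term: a bound on
`‖Δₕ(χ(Φ^{k+1}, Φ^k) − χ(φ^{k+1}, φ^k))‖₂` in terms of the differences
`φ̃^{k+1} = Φ^{k+1} − φ^{k+1}`, `φ̃^k = Φ^k − φ^k`, with a constant `C₁₈` independent of
`h`, `m`, `n` and of the grid functions. -/
theorem control_nonlinear_error :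
    ∃ C₁₈ > (0 : ℝ), ∀ (m n : ℕ) [NeZero m] [NeZero n] (h : ℝ), 0 < h →
      ∀ Φ₁ Φ₀ φ₁ φ₀ : Grid m n,
        norm2 h (lapH h (fun p => chi (Φ₁ p) (Φ₀ p) - chi (φ₁ p) (φ₀ p)))
          ≤ C₁₈ *
            ((normInf Φ₁ + normInf Φ₀ + normInf φ₁ + normInf φ₀) ^ 2
                * (norm2 h (lapH h (fun p => Φ₁ p - φ₁ p))
                  + norm2 h (lapH h (fun p => Φ₀ p - φ₀ p)))
              + (normInf Φ₁ + normInf Φ₀ + normInf φ₁ + normInf φ₀)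
                  * (gradNorm4 h Φ₁ + gradNorm4 h Φ₀ + gradNorm4 h φ₁ + gradNorm4 h φ₀)
                  * (gradNorm4 h (fun p => Φ₁ p - φ₁ p)
                    + gradNorm4 h (fun p => Φ₀ p - φ₀ p))
              + ((normInf Φ₁ + normInf Φ₀ + normInf φ₁ + normInf φ₀)
                    * (norm2 h (lapHx h φ₁) + norm2 h (lapHx h φ₀)
                      + norm2 h (lapHy h φ₁) + norm2 h (lapHy h φ₀))
                  + (gradNorm4 h Φ₁ + gradNorm4 h Φ₀ + gradNorm4 h φ₁
                      + gradNorm4 h φ₀) ^ 2)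
                * (normInf (fun p => Φ₁ p - φ₁ p) + normInf (fun p => Φ₀ p - φ₀ p))
              + ((gradNormInf h Φ₁ + gradNormInf h Φ₀) ^ 2
                  + (normInf Φ₁ + normInf Φ₀ + normInf φ₁ + normInf φ₀)
                    * (normInf (lapHx h Φ₁) + normInf (lapHx h Φ₀)
                      + normInf (lapHy h Φ₁) + normInf (lapHy h Φ₀)))
                * (norm2 h (fun p => Φ₁ p - φ₁ p)
                  + norm2 h (fun p => Φ₀ p - φ₀ p))) := by
  -- `24 = 2 · 3 · 4`: two directions, each contributing `3 · 4 K₁K₄‖∇ₕφ̃‖₄`, the largest term.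
  refine ⟨24, by norm_num, fun m n _ _ h _ Φ₁ Φ₀ φ₁ φ₀ => ?_⟩
  have hx := norm2_lapDir_chi_sub_le (h := h) (1, 0) norm4_dFwd_one_zero_le
    norm2_lapDir_one_zero_le Φ₁ Φ₀ φ₁ φ₀
  have hy := norm2_lapDir_chi_sub_le (h := h) (0, 1) norm4_dFwd_zero_one_le
    norm2_lapDir_zero_one_le Φ₁ Φ₀ φ₁ φ₀
  have hΔ := norm2_add_le (h := h) (lapDir h (1, 0) fun p => chi (Φ₁ p) (Φ₀ p) - chi (φ₁ p) (φ₀ p))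
    (lapDir h (0, 1) fun p => chi (Φ₁ p) (Φ₀ p) - chi (φ₁ p) (φ₀ p))
  rw [← lapH_eq_lapDir_add_lapDir] at hΔ
  simp only [lapDir_one_zero, lapDir_zero_one] at hx hy hΔ
  have hInf := normInf_nonneg (m := m) (n := n)
  have h₂ := norm2_nonneg (m := m) (n := n) (h := h)
  have hK := add_nonneg (add_nonneg (add_nonneg (hInf Φ₁) (hInf Φ₀)) (hInf φ₁)) (hInf φ₀)
  have hK₂ := add_nonneg (add_nonneg (add_nonneg (hInf (lapHx h Φ₁)) (hInf (lapHx h Φ₀)))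
    (hInf (lapHy h Φ₁))) (hInf (lapHy h Φ₀))
  have hK₃ := add_nonneg (add_nonneg (add_nonneg (h₂ (lapHx h φ₁)) (h₂ (lapHx h φ₀)))
    (h₂ (lapHy h φ₁))) (h₂ (lapHy h φ₀))
  have hL := add_nonneg (h₂ (lapH h fun p => Φ₁ p - φ₁ p)) (h₂ (lapH h fun p => Φ₀ p - φ₀ p))
  have hN := add_nonneg (hInf fun p => Φ₁ p - φ₁ p) (hInf fun p => Φ₀ p - φ₀ p)
  have hN₂ := add_nonneg (h₂ fun p => Φ₁ p - φ₁ p) (h₂ fun p => Φ₀ p - φ₀ p)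
  linarith [mul_nonneg (mul_nonneg hK hK) hL, mul_nonneg (mul_nonneg hK hK₃) hN,
    mul_nonneg (sq_nonneg (gradNorm4 h Φ₁ + gradNorm4 h Φ₀ + gradNorm4 h φ₁ + gradNorm4 h φ₀)) hN,
    mul_nonneg (sq_nonneg (gradNormInf h Φ₁ + gradNormInf h Φ₀)) hN₂,
    mul_nonneg (mul_nonneg hK hK₂) hN₂]
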